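/- arXiv:1202.5504 — 5 statements merged into one kernel-verified Lean document; each statement's English description precedes it below -/
import Mathlib

section
/- If n = p^k is a prime power with k ≥ 1, then gcd{C(n,1), C(n,2), ..., C(n,n-1)} = p. -/
/-! The gcd `d` divides `C(p^k, 1) = p^k`, so it is a power of `p`. Every `C(p^k, i)` with
`0 < i < p^k` is divisible by `p`, so `p ∣ d`, while by Kummer's theorem `C(p^k, p^(k-1))`
is divisible by `p` exactly once, so `p^2 ∤ d`. -/

theorem Nat.Prime.not_sq_dvd_choose_pow_succ {p : ℕ} (hp : p.Prime) (k : ℕ) :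
    ¬ p ^ 2 ∣ (p ^ (k + 1)).choose (p ^ k) := by
  have hle : p ^ k ≤ p ^ (k + 1) := Nat.pow_le_pow_right hp.pos k.le_succ
  rw [← emultiplicity_lt_iff_not_dvd,
    hp.emultiplicity_choose_prime_pow hle (pow_ne_zero k hp.ne_zero),
    multiplicity_pow_self_of_prime hp.prime, Nat.add_sub_cancel_left]
  exact_mod_cast Nat.one_lt_two

theorem Nat.Prime.eq_of_dvd_pow_of_not_sq_dvd {p d k m : ℕ} (hp : p.Prime)
    (hd : d ∣ p ^ k) (hpd : p ∣ d) (hdm : d ∣ m) (hm : ¬ p ^ 2 ∣ m) : d = p := by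
  obtain ⟨j, -, rfl⟩ := (Nat.dvd_prime_pow hp).mp hd
  have hj1 : 1 ≤ j := (Nat.pow_dvd_pow_iff_le_right hp.one_lt).mp (by simpa using hpd)
  have hj2 : j < 2 := by
    by_contra! h
    exact hm ((Nat.pow_dvd_pow p h).trans hdm)
  obtain rfl : j = 1 := by omega
  exact pow_one p

/-- If `n = p^k` is a prime power with `k ≥ 1`, then
`gcd {C(n,1), C(n,2), ..., C(n,n-1)} = p`. -/
theorem gcd_binomial_prime_power (p k n : ℕ) (hp : p.Prime) (hk : 1 ≤ k)
    (hn : n = p ^ k) :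
    (Finset.Icc 1 (n - 1)).gcd (fun i => n.choose i) = p := by
  obtain ⟨k, rfl⟩ : ∃ j, k = j + 1 := ⟨k - 1, by omega⟩
  subst hn
  have hlt : p ^ k < p ^ (k + 1) := Nat.pow_lt_pow_right hp.one_lt k.lt_succ_self
  have hpos : 0 < p ^ k := pow_pos hp.pos k
  have hmem {i : ℕ} (h0 : 0 < i) (hi : i < p ^ (k + 1)) : i ∈ Finset.Icc 1 (p ^ (k + 1) - 1) :=
    Finset.mem_Icc.mpr ⟨h0, by omega⟩
  refine hp.eq_of_dvd_pow_of_not_sq_dvd (k := k + 1) ?_ ?_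
    (Finset.gcd_dvd (hmem hpos hlt)) (hp.not_sq_dvd_choose_pow_succ k)
  · simpa using Finset.gcd_dvd (f := fun i => (p ^ (k + 1)).choose i) (hmem one_pos (by omega))
  · refine Finset.dvd_gcd fun i hi => ?_
    rw [Finset.mem_Icc] at hi
    exact hp.dvd_choose_pow (by omega) (by omega)
end

section
/- If n ≥ 2 is not a prime power, then gcd{C(n,1), C(n,2), ..., C(n,n-1)} = 1. -/
/-!
If a prime `p` divides every `C(n, i)` with `0 < i < n`, write `n = p^a * m` with `p ∤ m`.
By Lucas' theorem `C(p^a * m, p^a) ≡ m [MOD p]`, so `p^a` cannot lie strictly between `0` and `n`,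
i.e. `n = p^a`. Hence for `n` not a prime power no prime divides the gcd.
-/

namespace Nat

theorem choose_prime_pow_mul_modEq {p : ℕ} [Fact p.Prime] (j x : ℕ) :
    (p ^ j * x).choose (p ^ j) ≡ x [MOD p] := by
  induction j with
  | zero => simp [ModEq.refl]
  | succ j ih =>
    have hp : 0 < p := (Fact.out : p.Prime).pos
    have lucas := @Choose.choose_modEq_choose_mod_mul_choose_div_nat
      (p * (p ^ j * x)) (p * p ^ j) p _
    rw [mul_mod_right, mul_mod_right, Nat.mul_div_cancel_left _ hp,
      Nat.mul_div_cancel_left _ hp, choose_zero_right, one_mul] at lucas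
    rw [pow_succ', mul_assoc]
    exact lucas.trans ih

theorem ordProj_eq_self_of_prime_dvd_choose {n p : ℕ} (hp : p.Prime) (hn : n ≠ 0)
    (hdvd : ∀ i, 0 < i → i < n → p ∣ n.choose i) : p ^ n.factorization p = n := by
  have : Fact p.Prime := ⟨hp⟩
  set q := p ^ n.factorization p
  have hsplit : q * (n / q) = n := ordProj_mul_ordCompl_eq_self n p
  by_contra hqn
  have hq_lt : q < n :=
    lt_of_le_of_ne (le_of_dvd (pos_of_ne_zero hn) (ordProj_dvd n p)) hqn
  have hchoose : n.choose q ≡ n / q [MOD p] := by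
    conv_lhs => rw [← hsplit]
    exact choose_prime_pow_mul_modEq _ _
  exact not_dvd_ordCompl hp hn
    ((hchoose.dvd_iff dvd_rfl).mp (hdvd q (pow_pos hp.pos _) hq_lt))

end Nat

/-- If `n ≥ 2` is not a prime power, then
`gcd {C(n,1), C(n,2), ..., C(n,n-1)} = 1`. -/
theorem gcd_binomial_not_prime_power (n : ℕ) (hn : 2 ≤ n) (h : ¬ IsPrimePow n) :
    (Finset.Icc 1 (n - 1)).gcd (fun i => n.choose i) = 1 := by
  by_contra hg
  obtain ⟨p, hp, hpg⟩ := Nat.exists_prime_and_dvd hg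
  have hdvd : ∀ i, 0 < i → i < n → p ∣ n.choose i := fun i hi0 hin =>
    Finset.dvd_gcd_iff.mp hpg i (Finset.mem_Icc.mpr ⟨hi0, by omega⟩)
  have hpow := Nat.ordProj_eq_self_of_prime_dvd_choose hp (by omega) hdvd
  have hexp : 0 < n.factorization p := by
    by_contra h0
    rw [Nat.eq_zero_of_not_pos h0, pow_zero] at hpow
    omega
  exact h ((isPrimePow_nat_iff n).mpr ⟨p, _, hp, hexp, hpow⟩)
end

section
/- If n has at least two distinct prime factors and p^k is the exact power of a prime p dividing n (so p^k || n), then p does not divide C(n, p^k). -/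
/-!
Lucas's theorem for one base-`p` digit, `C(a, b) ≡ C(a % p, b % p) * C(a / p, b / p) [MOD p]`,
strips a factor `p` from both arguments of `C(p^k s, p^k)` without changing its residue, so
`C(p^k s, p^k) ≡ C(s, 1) = s [MOD p]`. When `p^k ∥ n`, the cofactor `s = n / p^k` is prime to `p`.
-/

theorem Nat.choose_pow_mul_pow_modEq {p : ℕ} [Fact p.Prime] (k s : ℕ) :
    (p ^ k * s).choose (p ^ k) ≡ s [MOD p] := by
  induction k with
  | zero => simp [Nat.ModEq.refl]
  | succ k ih =>
    have hp : 0 < p := (Fact.out : p.Prime).pos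
    refine Choose.choose_modEq_choose_mod_mul_choose_div_nat.trans ?_
    rw [pow_succ', mul_assoc, Nat.mul_mod_right, Nat.mul_mod_right,
      Nat.mul_div_cancel_left _ hp, Nat.mul_div_cancel_left _ hp, choose_zero_right, one_mul]
    exact ih

theorem not_prime_dvd_choose_exact_power_general (n p k : ℕ)
    (hp : p.Prime) (hdvd : p ^ k ∣ n) (hndvd : ¬ p ^ (k + 1) ∣ n) :
    ¬ p ∣ n.choose (p ^ k) := by
  have := Fact.mk hp
  obtain ⟨s, rfl⟩ := hdvd
  have hps : ¬ p ∣ s := fun h => hndvd (by rw [pow_succ]; exact mul_dvd_mul_left _ h)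
  rwa [(Nat.choose_pow_mul_pow_modEq k s).dvd_iff dvd_rfl]

/-- If `n` has at least two distinct prime factors and `p^k` is the exact power of the
prime `p` dividing `n` (i.e. `p^k ∣ n` but `p^(k+1) ∤ n`), then `p` does not divide
`C(n, p^k)`. -/
theorem not_prime_dvd_choose_exact_power (n p k : ℕ)
    (htwo : ∃ q r : ℕ, q.Prime ∧ r.Prime ∧ q ≠ r ∧ q ∣ n ∧ r ∣ n)
    (hp : p.Prime) (hdvd : p ^ k ∣ n) (hndvd : ¬ p ^ (k + 1) ∣ n) :
    ¬ p ∣ n.choose (p ^ k) :=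
  not_prime_dvd_choose_exact_power_general n p k hp hdvd hndvd
end

section
/- For n ≥ 2, the linear Diophantine equation x_1·C(n,1) + x_2·C(n,2) + ... + x_{n-1}·C(n,n-1) = 1 has a solution in integers x_1, ..., x_{n-1} if and only if n is not a prime power. -/
/-!
Integers combine the `C(n, i)`, `0 < i < n`, to `1` exactly when no prime divides all of them.
If `n = p ^ k`, the prime `p` divides each of them. Otherwise take any prime `p`: if `p ∤ n`
then `p ∤ C(n, 1) = n`; if `p ^ a ∥ n` with `a ≥ 1`, then `p ^ a < n` and Lucas's theorem gives
`C(n, p ^ a) ≡ n / p ^ a ≢ 0 (mod p)`.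
-/

open Finset

theorem exists_sum_mul_eq_one_iff_forall_prime {ι : Type*} (s : Finset ι) (c : ι → ℕ) :
    (∃ x : ι → ℤ, ∑ i ∈ s, x i * (c i : ℤ) = 1) ↔ ∀ p : ℕ, p.Prime → ∃ i ∈ s, ¬ p ∣ c i := by
  constructor
  · rintro ⟨x, hx⟩ p hp
    by_contra! hdvd
    have : (p : ℤ) ∣ 1 :=
      hx ▸ dvd_sum fun i hi => (Int.natCast_dvd_natCast.mpr (hdvd i hi)).mul_left _
    exact hp.one_lt.ne' (by exact_mod_cast Int.eq_one_of_dvd_one (by positivity) this)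
  · intro h
    obtain ⟨x, hx⟩ := s.gcd_eq_sum_mul fun i => (c i : ℤ)
    suffices hg1 : s.gcd (fun i => (c i : ℤ)) = 1 from
      ⟨x, by rw [← hg1, hx]; exact sum_congr rfl fun i _ => mul_comm ..⟩
    set g := s.gcd fun i => (c i : ℤ)
    have hg : 0 ≤ g := Int.nonneg_of_normalize_eq_self (normalize_gcd ..)
    by_contra hg1
    obtain ⟨p, hp, hpg⟩ := Nat.exists_prime_and_dvd (n := g.natAbs) (by omega)
    obtain ⟨i, hi, hpi⟩ := h p hp
    exact hpi (Int.natCast_dvd_natCast.mp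
      ((Int.natCast_dvd.mpr hpg).trans (gcd_dvd hi)))

theorem Nat.choose_pow_mul_modEq {p : ℕ} [Fact p.Prime] (a m : ℕ) :
    (p ^ a * m).choose (p ^ a) ≡ m [MOD p] := by
  induction a with
  | zero => simp [Nat.ModEq]
  | succ a ih =>
    have hp := (Fact.out : p.Prime).pos
    refine (Choose.choose_modEq_choose_mod_mul_choose_div_nat).trans ?_
    rw [pow_succ', mul_assoc, Nat.mul_mod_right, Nat.mul_mod_right, Nat.mul_div_cancel_left _ hp,
      Nat.mul_div_cancel_left _ hp, Nat.choose_zero_right, one_mul]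
    exact ih

theorem Nat.exists_not_dvd_choose_of_not_isPrimePow {n p : ℕ} (hn : 2 ≤ n) (hpow : ¬IsPrimePow n)
    (hp : p.Prime) : ∃ i ∈ Icc 1 (n - 1), ¬ p ∣ n.choose i := by
  have : Fact p.Prime := ⟨hp⟩
  by_cases hpn : p ∣ n
  · refine ⟨ordProj[p] n, mem_Icc.mpr ⟨Nat.one_le_pow _ _ hp.pos, ?_⟩, ?_⟩
    · have hle := Nat.le_of_dvd (by omega) (Nat.ordProj_dvd n p)
      have hne : ordProj[p] n ≠ n := fun h =>
        hpow ⟨p, _, hp.prime, hp.factorization_pos_of_dvd (by omega) hpn, h⟩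
      omega
    · have hmod := Nat.choose_pow_mul_modEq (p := p) (n.factorization p) (ordCompl[p] n)
      rw [Nat.ordProj_mul_ordCompl_eq_self] at hmod
      rw [Nat.dvd_iff_mod_eq_zero, hmod, ← Nat.dvd_iff_mod_eq_zero]
      exact Nat.not_dvd_ordCompl hp (by omega)
  · exact ⟨1, mem_Icc.mpr ⟨le_rfl, by omega⟩, by rwa [Nat.choose_one_right]⟩

/-- For `n ≥ 2`, the linear Diophantine equation
`x_1·C(n,1) + ... + x_{n-1}·C(n,n-1) = 1` has an integer solution if and only if
`n` is not a prime power. -/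
theorem diophantine_binomial_iff_not_prime_power (n : ℕ) (hn : 2 ≤ n) :
    (∃ x : ℕ → ℤ, ∑ i ∈ Finset.Icc 1 (n - 1), x i * (n.choose i : ℤ) = 1) ↔
      ¬ IsPrimePow n := by
  rw [exists_sum_mul_eq_one_iff_forall_prime]
  constructor
  · rintro h ⟨p, k, hp, hk, rfl⟩
    obtain ⟨i, hi, hpi⟩ := h p hp.nat_prime
    have := Nat.one_lt_pow hk.ne' hp.nat_prime.one_lt
    rw [mem_Icc] at hi
    exact hpi (hp.nat_prime.dvd_choose_pow (by omega) (by omega))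
  · exact fun hpow p hp => Nat.exists_not_dvd_choose_of_not_isPrimePow hn hpow hp
end

section
/- The relation on pairs (σ, i) with σ ∈ S_n and i ∈ {1,...,d}^{n-1} defined by: (σ,i) ⪯ (σ',i') iff whenever σ'_k appears before σ'_ℓ in σ' with separating index i'_p (the minimum index between them), then either σ_k appears before σ_ℓ in σ with minimum separating index i_p ≤ i'_p, or σ_ℓ appears before σ_k in σ with minimum separating index i_p < i'_p — is a partial order (reflexive, antisymmetric, transitive). -/
/-- Extend an index vector `i ∈ {1,...,d}^{n-1}` (encoded as `Fin (n-1) → Fin d`,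
with actual value `(i j) + 1`) to a function `ℕ → ℕ`. -/
def idxFun {n d : ℕ} (ii : Fin (n - 1) → Fin d) : ℕ → ℕ :=
  fun t => if h : t < n - 1 then (ii ⟨t, h⟩ : ℕ) + 1 else 0

/-- The minimum separating index between positions `a < b`: `min {f a, ..., f (b-1)}`. -/
noncomputable def minSep (f : ℕ → ℕ) (a b : ℕ) : ℕ := sInf (f '' Set.Ico a b)

/-- The order relation on pairs `(σ, i)`: `(σ,i) ⪯ (σ',i')` iff for all letters `u, v`
such that `u` appears before `v` in `σ'`, either `u` appears before `v` in `σ` with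
minimum separating index `≤` that in `σ'`, or `v` appears before `u` in `σ` with
minimum separating index `<` that in `σ'`. -/
def cellLE (n d : ℕ) (p q : Equiv.Perm (Fin n) × (Fin (n - 1) → Fin d)) : Prop :=
  ∀ u v : Fin n, (q.1.symm u : ℕ) < (q.1.symm v : ℕ) →
    ((p.1.symm u : ℕ) < (p.1.symm v : ℕ) ∧
      minSep (idxFun p.2) (p.1.symm u) (p.1.symm v) ≤
        minSep (idxFun q.2) (q.1.symm u) (q.1.symm v)) ∨
    ((p.1.symm v : ℕ) < (p.1.symm u : ℕ) ∧
      minSep (idxFun p.2) (p.1.symm v) (p.1.symm u) <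
        minSep (idxFun q.2) (q.1.symm u) (q.1.symm v))

/-!
Reflexivity and transitivity follow by chaining the inequalities in the two clauses of `⪯`.
For antisymmetry, the strict inequality in the second clause forbids `p ⪯ q ⪯ p` from
reversing any pair of letters, so both permutations induce the same order on the letters and
coincide. Two letters in adjacent positions are separated by a single entry of the index
vector, which is therefore read off `minSep`; comparing these in both directions gives `i = i'`.
-/

lemma minSep_self_add_one (f : ℕ → ℕ) (a : ℕ) : minSep f a (a + 1) = f a := by
  simp [minSep, Set.Ico_add_one_right_eq_Icc]

lemma idxFun_apply {n d : ℕ} (i : Fin (n - 1) → Fin d) (t : Fin (n - 1)) :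
    idxFun i t = i t + 1 := by
  simp [idxFun]

lemma Equiv.Perm.eq_of_symm_lt_imp {α : Type*} [LinearOrder α] [Finite α] {σ τ : Equiv.Perm α}
    (h : ∀ u v, τ.symm u < τ.symm v → σ.symm u < σ.symm v) : σ = τ := by
  have hmono : StrictMono (σ.symm ∘ τ) := fun a b hab => by
    simpa using h (τ a) (τ b) (by simpa using hab)
  exact Equiv.ext fun x => (σ.symm_apply_eq.mp (congrFun hmono.eq_id x)).symm

section cellLE

variable {n d : ℕ}

lemma cellLE_refl (p : Equiv.Perm (Fin n) × (Fin (n - 1) → Fin d)) : cellLE n d p p :=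
  fun _ _ h => Or.inl ⟨h, le_rfl⟩

lemma cellLE_trans {p q r : Equiv.Perm (Fin n) × (Fin (n - 1) → Fin d)}
    (hpq : cellLE n d p q) (hqr : cellLE n d q r) : cellLE n d p r := by
  intro u v h
  rcases hqr u v h with ⟨h₁, h₂⟩ | ⟨h₁, h₂⟩
  · rcases hpq u v h₁ with ⟨h₃, h₄⟩ | ⟨h₃, h₄⟩
    · exact Or.inl ⟨h₃, h₄.trans h₂⟩
    · exact Or.inr ⟨h₃, h₄.trans_le h₂⟩
  · rcases hpq v u h₁ with ⟨h₃, h₄⟩ | ⟨h₃, h₄⟩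
    · exact Or.inr ⟨h₃, h₄.trans_lt h₂⟩
    · exact Or.inl ⟨h₃, (h₄.trans h₂).le⟩

lemma lt_of_cellLE_of_cellLE {p q : Equiv.Perm (Fin n) × (Fin (n - 1) → Fin d)}
    (hpq : cellLE n d p q) (hqp : cellLE n d q p) {u v : Fin n}
    (h : q.1.symm u < q.1.symm v) : p.1.symm u < p.1.symm v := by
  rcases hpq u v h with ⟨hp, -⟩ | ⟨hp, hlt⟩
  · exact hp
  · rcases hqp v u hp with ⟨hq, -⟩ | ⟨-, hlt'⟩
    · exact absurd h (lt_asymm hq)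
    · exact absurd hlt (lt_asymm hlt')

lemma minSep_le_of_cellLE {σ : Equiv.Perm (Fin n)} {i j : Fin (n - 1) → Fin d}
    (h : cellLE n d (σ, i) (σ, j)) {u v : Fin n} (huv : σ.symm u < σ.symm v) :
    minSep (idxFun i) (σ.symm u) (σ.symm v) ≤ minSep (idxFun j) (σ.symm u) (σ.symm v) := by
  rcases h u v huv with ⟨-, hle⟩ | ⟨hvu, -⟩
  · exact hle
  · exact absurd huv (lt_asymm hvu)

lemma cellLE_antisymm {p q : Equiv.Perm (Fin n) × (Fin (n - 1) → Fin d)}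
    (hpq : cellLE n d p q) (hqp : cellLE n d q p) : p = q := by
  obtain ⟨σ, i⟩ := p
  obtain ⟨τ, j⟩ := q
  obtain rfl : σ = τ :=
    Equiv.Perm.eq_of_symm_lt_imp fun _ _ h => lt_of_cellLE_of_cellLE hpq hqp h
  suffices ∀ t : Fin (n - 1), idxFun i t = idxFun j t by
    congr 1
    funext t
    simpa [idxFun_apply, Fin.ext_iff] using this t
  intro t
  have ht : (t : ℕ) + 1 < n := by omega
  have hadj : σ.symm (σ ⟨t, by omega⟩) < σ.symm (σ ⟨t + 1, ht⟩) := by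
    simp [Fin.lt_def]
  have hij := minSep_le_of_cellLE hpq hadj
  have hji := minSep_le_of_cellLE hqp hadj
  simp only [Equiv.symm_apply_apply, minSep_self_add_one] at hij hji
  exact le_antisymm hij hji

end cellLE

theorem cellLE_is_partial_order_general (n d : ℕ) :
    (∀ p, cellLE n d p p) ∧
    (∀ p q, cellLE n d p q → cellLE n d q p → p = q) ∧
    (∀ p q r, cellLE n d p q → cellLE n d q r → cellLE n d p r) :=
  ⟨cellLE_refl, fun _ _ => cellLE_antisymm, fun _ _ _ => cellLE_trans⟩

/-- The relation `⪯` on pairs `(σ, i)` is a partial order: reflexive, antisymmetric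
and transitive. This is the face poset of the cell complex model of `F(ℝ^d, n)`. -/
theorem cellLE_is_partial_order (n d : ℕ) (hn : 2 ≤ n) (hd : 1 ≤ d) :
    (∀ p, cellLE n d p p) ∧
    (∀ p q, cellLE n d p q → cellLE n d q p → p = q) ∧
    (∀ p q r, cellLE n d p q → cellLE n d q r → cellLE n d p r) :=
  cellLE_is_partial_order_general n d
end
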